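/- Let p be a prime and G a commutative group, and let g ∈ G satisfy g^p = 1 (so that exponentiation by elements of ℤ/pℤ is well defined). Let sk, b, R, R' ∈ ℤ/pℤ with R ≠ R', and set the double-spending tags T = g^{sk + b·R} and T' = g^{sk + b·R'}. Then ((T')^{R} · T^{-R'})^{(R − R')⁻¹} = g^{sk}. -/
import Mathlib


/-- Exponentiation of a group element by an element of `ZMod p`. -/
def zpowZMod {G : Type*} [Monoid G] {p : ℕ} (g : G) (a : ZMod p) : G := g ^ a.val

private lemma pow_mod_eq {G : Type*} [Monoid G] {p : ℕ} (g : G) (hg : g ^ p = 1)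
    (m : ℕ) : g ^ m = g ^ (m % p) := by
  conv_lhs => rw [← Nat.div_add_mod m p]
  rw [pow_add, pow_mul, hg, one_pow, one_mul]

private lemma zpow_cast {G : Type*} [Monoid G] {p : ℕ} [NeZero p] (g : G) (hg : g ^ p = 1)
    (m : ℕ) : g ^ m = zpowZMod g (m : ZMod p) := by
  rw [zpowZMod, ZMod.val_natCast, pow_mod_eq g hg m]

private lemma zpowZMod_mul {G : Type*} [Monoid G] {p : ℕ} [NeZero p] (g : G) (hg : g ^ p = 1)
    (a b : ZMod p) : zpowZMod (zpowZMod g a) b = zpowZMod g (a * b) := by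
  rw [zpowZMod, zpowZMod, ← pow_mul, zpow_cast g hg (a.val * b.val)]
  push_cast [ZMod.natCast_val, ZMod.cast_id]
  rfl

private lemma zpowZMod_add {G : Type*} [Monoid G] {p : ℕ} [NeZero p] (g : G) (hg : g ^ p = 1)
    (a b : ZMod p) : zpowZMod g a * zpowZMod g b = zpowZMod g (a + b) := by
  rw [zpowZMod, zpowZMod, ← pow_add, zpow_cast g hg (a.val + b.val)]
  push_cast [ZMod.natCast_val, ZMod.cast_id]
  rfl

/-- Correctness of the double-spender identification algorithm cecIdentify (Game 15):
two tags on the same coin under distinct challenges recover the user's public key. -/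
theorem identify_double_spender_correctness
    {p : ℕ} (hp : p.Prime) {G : Type*} [CommGroup G]
    (g : G) (hg : g ^ p = 1)
    (sk b R R' : ZMod p) (hRR' : R ≠ R')
    (T T' : G)
    (hT : T = zpowZMod g (sk + b * R))
    (hT' : T' = zpowZMod g (sk + b * R')) :
    zpowZMod (zpowZMod T' R * zpowZMod T (-R')) ((R - R')⁻¹) = zpowZMod g sk := by
  haveI : Fact p.Prime := ⟨hp⟩
  subst hT hT'
  rw [zpowZMod_mul g hg, zpowZMod_mul g hg, zpowZMod_add g hg, zpowZMod_mul g hg]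
  congr 1
  have h : R - R' ≠ 0 := sub_ne_zero.mpr hRR'
  field_simp
  ring
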